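/- Let M = (L(E), ρ) be a q-polymatroid on E = F_q^n and define ρ*(V) = dim(V) + ρ(V^⊥) - ρ(E) for all subspaces V of E. Then ρ* is again a q-rank function (bounded, monotone, submodular), and the rank of the dual q-polymatroid satisfies ρ*(E) = n - ρ(E). Moreover (ρ*)* = ρ. -/

import Mathlib

open Matrix

variable {F : Type*} [Field F]

/-- Column space of a matrix: the span of its columns. -/
def colSpace {n m : ℕ} (M : Matrix (Fin n) (Fin m) F) : Submodule F (Fin n → F) :=
  Submodule.span F (Set.range Mᵀ)

lemma colSpace_le_iff {n m : ℕ} (M : Matrix (Fin n) (Fin m) F) (U : Submodule F (Fin n → F)) :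
    colSpace M ≤ U ↔ ∀ j, Mᵀ j ∈ U := by
  rw [colSpace, Submodule.span_le]
  constructor
  · intro h j
    exact h (Set.mem_range_self j)
  · rintro h _ ⟨j, rfl⟩
    exact h j

/-- `C(U)`: the codewords of `C` whose column space is contained in `U`. -/
def codeCU {n m : ℕ} (C : Submodule F (Matrix (Fin n) (Fin m) F))
    (U : Submodule F (Fin n → F)) : Submodule F (Matrix (Fin n) (Fin m) F) where
  carrier := {M | M ∈ C ∧ colSpace M ≤ U}
  add_mem' := by
    rintro a b ⟨haC, ha⟩ ⟨hbC, hb⟩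
    refine ⟨C.add_mem haC hbC, (colSpace_le_iff _ _).2 fun j => ?_⟩
    have h := U.add_mem ((colSpace_le_iff a U).1 ha j) ((colSpace_le_iff b U).1 hb j)
    rw [Matrix.transpose_add]
    exact h
  zero_mem' := by
    exact ⟨C.zero_mem, (colSpace_le_iff _ _).2 fun j => U.zero_mem⟩
  smul_mem' := by
    rintro c a ⟨haC, ha⟩
    refine ⟨C.smul_mem c haC, (colSpace_le_iff _ _).2 fun j => ?_⟩
    have h := U.smul_mem c ((colSpace_le_iff a U).1 ha j)
    rw [Matrix.transpose_smul]
    exact h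

/-- Orthogonal complement with respect to the standard (dot-product) bilinear form. -/
def perp {n : ℕ} (U : Submodule F (Fin n → F)) : Submodule F (Fin n → F) where
  carrier := {v | ∀ u ∈ U, v ⬝ᵥ u = 0}
  add_mem' := by
    intro a b ha hb u hu
    rw [add_dotProduct, ha u hu, hb u hu, add_zero]
  zero_mem' := by
    intro u hu
    rw [zero_dotProduct]
  smul_mem' := by
    intro c a ha u hu
    rw [smul_dotProduct, ha u hu, smul_zero]

/-- The minimum rank distance of a matrix code. -/
noncomputable def minRankDist {n m : ℕ} (C : Submodule F (Matrix (Fin n) (Fin m) F)) : ℕ :=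
  sInf {r : ℕ | ∃ M ∈ C, M ≠ 0 ∧ M.rank = r}

/-- The rank function of the q-polymatroid associated to a matrix rank-metric code. -/
noncomputable def rhoCode {n m : ℕ} (C : Submodule F (Matrix (Fin n) (Fin m) F))
    (U : Submodule F (Fin n → F)) : ℚ :=
  ((Module.finrank F C : ℚ) - (Module.finrank F (codeCU C (perp U)) : ℚ)) / (m : ℚ)

/-!
Orthogonal complementation with respect to a nondegenerate reflexive bilinear form is an
inclusion-reversing involution of the subspace lattice that exchanges `⊓` and `⊔` and satisfies
`dim W^⊥ = n - dim W`. Through it, the bounds and monotonicity of `ρ*` reduce to the growth bound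
`ρ X ≤ ρ Y + (dim X - dim Y)` for `Y ≤ X` (submodularity applied to `Y` and a complement of `Y`
in `X`), and submodularity of `ρ*` is submodularity of `ρ` at `A^⊥, B^⊥` plus the dimension
formula for `A ⊔ B` and `A ⊓ B`.
-/

open Module

structure IsQRankFunction {K V : Type*} [Field K] [AddCommGroup V] [Module K V]
    (ρ : Submodule K V → ℝ) : Prop where
  bounded : ∀ A : Submodule K V, 0 ≤ ρ A ∧ ρ A ≤ (finrank K A : ℝ)
  mono : ∀ A B : Submodule K V, A ≤ B → ρ A ≤ ρ B
  submodular : ∀ A B : Submodule K V, ρ (A ⊓ B) + ρ (A ⊔ B) ≤ ρ A + ρ B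

namespace LinearMap.BilinForm

variable {R M : Type*} [CommSemiring R] [AddCommMonoid M] [Module R M]

theorem orthogonal_sup (B : LinearMap.BilinForm R M) (N L : Submodule R M) :
    B.orthogonal (N ⊔ L) = B.orthogonal N ⊓ B.orthogonal L := by
  refine le_antisymm (le_inf (orthogonal_le le_sup_left) (orthogonal_le le_sup_right)) ?_
  intro v hv
  rw [Submodule.mem_inf, mem_orthogonal_iff, mem_orthogonal_iff] at hv
  rw [mem_orthogonal_iff]
  intro u hu
  obtain ⟨x, hx, y, hy, rfl⟩ := Submodule.mem_sup.1 hu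
  rw [map_add, LinearMap.add_apply, hv.1 x hx, hv.2 y hy, add_zero]

variable {K V : Type*} [Field K] [AddCommGroup V] [Module K V] [FiniteDimensional K V]
  {B : LinearMap.BilinForm K V}

theorem orthogonal_inf (hB : B.Nondegenerate) (hB₀ : B.IsRefl) (N L : Submodule K V) :
    B.orthogonal (N ⊓ L) = B.orthogonal N ⊔ B.orthogonal L := by
  conv_lhs => rw [← orthogonal_orthogonal hB hB₀ N, ← orthogonal_orthogonal hB hB₀ L,
    ← orthogonal_sup, orthogonal_orthogonal hB hB₀]

theorem cast_finrank_orthogonal (hB : B.Nondegenerate) (W : Submodule K V) :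
    (finrank K (B.orthogonal W) : ℝ) = finrank K V - finrank K W := by
  rw [finrank_orthogonal hB, Nat.cast_sub (Submodule.finrank_le W)]

end LinearMap.BilinForm

open LinearMap.BilinForm

section

variable {K V : Type*} [Field K] [AddCommGroup V] [Module K V] {ρ : Submodule K V → ℝ}

namespace IsQRankFunction

theorem map_bot (hρ : IsQRankFunction ρ) : ρ ⊥ = 0 := by
  have h := hρ.bounded ⊥
  rw [finrank_bot, Nat.cast_zero] at h
  exact le_antisymm h.2 h.1

theorem le_add_finrank_sub [FiniteDimensional K V] (hρ : IsQRankFunction ρ)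
    {Y X : Submodule K V} (h : Y ≤ X) : ρ X ≤ ρ Y + (finrank K X - finrank K Y) := by
  obtain ⟨W, hW⟩ := Submodule.exists_isCompl Y
  -- by the modular law, `W ⊓ X` is a complement of `Y` inside `X`
  have hsup : Y ⊔ W ⊓ X = X := by
    rw [← sup_inf_assoc_of_le W h, hW.sup_eq_top, top_inf_eq]
  have hinf : Y ⊓ (W ⊓ X) = ⊥ := by
    rw [← inf_assoc, hW.inf_eq_bot, bot_inf_eq]
  have hdim := Submodule.finrank_sup_add_finrank_inf_eq Y (W ⊓ X)
  rw [hsup, hinf, finrank_bot, add_zero] at hdim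
  have hdim' : (finrank K X : ℝ) = finrank K Y + finrank K (W ⊓ X : Submodule K V) := by
    exact_mod_cast hdim
  have hsub := hρ.submodular Y (W ⊓ X)
  rw [hsup, hinf, hρ.map_bot] at hsub
  linarith [(hρ.bounded (W ⊓ X)).2]

end IsQRankFunction

noncomputable def dualRank (B : LinearMap.BilinForm K V) (ρ : Submodule K V → ℝ)
    (W : Submodule K V) : ℝ :=
  finrank K W + ρ (B.orthogonal W) - ρ ⊤

variable {B : LinearMap.BilinForm K V}

theorem dualRank_top (hρ : IsQRankFunction ρ) (hB : B.Nondegenerate) :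
    dualRank B ρ ⊤ = finrank K V - ρ ⊤ := by
  rw [dualRank, orthogonal_top_eq_bot hB, hρ.map_bot, finrank_top, add_zero]

variable [FiniteDimensional K V]

theorem IsQRankFunction.dual (hρ : IsQRankFunction ρ) (hB : B.Nondegenerate)
    (hB₀ : B.IsRefl) : IsQRankFunction (dualRank B ρ) where
  bounded A := by
    have hgrowth := hρ.le_add_finrank_sub (le_top (a := B.orthogonal A))
    rw [finrank_top, cast_finrank_orthogonal hB] at hgrowth
    have hmono := hρ.mono _ _ (le_top (a := B.orthogonal A))
    constructor <;> (rw [dualRank]; linarith)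
  mono A C hAC := by
    have hgrowth := hρ.le_add_finrank_sub (orthogonal_le (B := B) hAC)
    rw [cast_finrank_orthogonal hB, cast_finrank_orthogonal hB] at hgrowth
    simp only [dualRank]
    linarith
  submodular A C := by
    have hsub := hρ.submodular (B.orthogonal A) (B.orthogonal C)
    rw [← orthogonal_sup, ← orthogonal_inf hB hB₀] at hsub
    have hdim : (finrank K (A ⊔ C : Submodule K V) : ℝ) + finrank K (A ⊓ C : Submodule K V) =
        finrank K A + finrank K C := by
      exact_mod_cast Submodule.finrank_sup_add_finrank_inf_eq A C
    simp only [dualRank]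
    linarith

theorem dualRank_dualRank (hρ : IsQRankFunction ρ) (hB : B.Nondegenerate) (hB₀ : B.IsRefl) :
    dualRank B (dualRank B ρ) = ρ := by
  funext W
  rw [dualRank, dualRank_top hρ hB, dualRank, orthogonal_orthogonal hB hB₀,
    cast_finrank_orthogonal hB]
  ring

end

theorem dotProductBilin_nondegenerate {ι R : Type*} [Fintype ι] [CommRing R] :
    (dotProductBilin R R : LinearMap.BilinForm R (ι → R)).Nondegenerate :=
  ⟨fun v hv => dotProduct_eq_zero v hv,
    fun w hw => dotProduct_eq_zero w fun v => by rw [dotProduct_comm]; exact hw v⟩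

theorem dotProductBilin_isRefl {ι R : Type*} [Fintype ι] [CommRing R] :
    (dotProductBilin R R : LinearMap.BilinForm R (ι → R)).IsRefl := fun v w h => by
  rw [dotProductBilin_apply_apply] at h ⊢
  rwa [dotProduct_comm]

theorem perp_eq_orthogonal {n : ℕ} (U : Submodule F (Fin n → F)) :
    perp U = LinearMap.BilinForm.orthogonal (dotProductBilin F F) U := by
  ext v
  simp only [mem_orthogonal_iff, dotProductBilin_apply_apply, dotProduct_comm]
  rfl

theorem dual_qrank_function_general {n : ℕ}
    (ρ : Submodule F (Fin n → F) → ℝ)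
    (hR1 : ∀ A : Submodule F (Fin n → F), 0 ≤ ρ A ∧ ρ A ≤ (Module.finrank F A : ℝ))
    (hR2 : ∀ A B : Submodule F (Fin n → F), A ≤ B → ρ A ≤ ρ B)
    (hR3 : ∀ A B : Submodule F (Fin n → F), ρ (A ⊓ B) + ρ (A ⊔ B) ≤ ρ A + ρ B) :
    let ρd : Submodule F (Fin n → F) → ℝ :=
      fun V => (Module.finrank F V : ℝ) + ρ (perp V) - ρ ⊤
    (∀ A : Submodule F (Fin n → F), 0 ≤ ρd A ∧ ρd A ≤ (Module.finrank F A : ℝ)) ∧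
    (∀ A B : Submodule F (Fin n → F), A ≤ B → ρd A ≤ ρd B) ∧
    (∀ A B : Submodule F (Fin n → F), ρd (A ⊓ B) + ρd (A ⊔ B) ≤ ρd A + ρd B) ∧
    ρd ⊤ = (n : ℝ) - ρ ⊤ ∧
    (∀ V : Submodule F (Fin n → F),
      (Module.finrank F V : ℝ) + ρd (perp V) - ρd ⊤ = ρ V) := by
  intro ρd
  have hρ : IsQRankFunction ρ := ⟨hR1, hR2, hR3⟩
  have hB := dotProductBilin_nondegenerate (ι := Fin n) (R := F)
  have hB₀ := dotProductBilin_isRefl (ι := Fin n) (R := F)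
  have hρd : ρd = dualRank (dotProductBilin F F) ρ :=
    funext fun V => by rw [dualRank, ← perp_eq_orthogonal]
  obtain ⟨hbounded, hmono, hsubmodular⟩ := hρd ▸ hρ.dual hB hB₀
  refine ⟨hbounded, hmono, hsubmodular, ?_, fun V => ?_⟩
  · rw [hρd, dualRank_top hρ hB, finrank_fin_fun]
  · rw [hρd, perp_eq_orthogonal]
    exact congrFun (dualRank_dualRank hρ hB hB₀) V

/-- the dual rank function `ρ*(V) = dim V + ρ(V^⊥) - ρ(E)` is again a
q-rank function, `ρ*(E) = n - ρ(E)`, and `(ρ*)* = ρ`. -/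
theorem dual_qrank_function [Fintype F] {n : ℕ}
    (ρ : Submodule F (Fin n → F) → ℝ)
    (hR1 : ∀ A : Submodule F (Fin n → F), 0 ≤ ρ A ∧ ρ A ≤ (Module.finrank F A : ℝ))
    (hR2 : ∀ A B : Submodule F (Fin n → F), A ≤ B → ρ A ≤ ρ B)
    (hR3 : ∀ A B : Submodule F (Fin n → F), ρ (A ⊓ B) + ρ (A ⊔ B) ≤ ρ A + ρ B) :
    let ρd : Submodule F (Fin n → F) → ℝ :=
      fun V => (Module.finrank F V : ℝ) + ρ (perp V) - ρ ⊤
    (∀ A : Submodule F (Fin n → F), 0 ≤ ρd A ∧ ρd A ≤ (Module.finrank F A : ℝ)) ∧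
    (∀ A B : Submodule F (Fin n → F), A ≤ B → ρd A ≤ ρd B) ∧
    (∀ A B : Submodule F (Fin n → F), ρd (A ⊓ B) + ρd (A ⊔ B) ≤ ρd A + ρd B) ∧
    ρd ⊤ = (n : ℝ) - ρ ⊤ ∧
    (∀ V : Submodule F (Fin n → F),
      (Module.finrank F V : ℝ) + ρd (perp V) - ρd ⊤ = ρ V) :=
  dual_qrank_function_general ρ hR1 hR2 hR3
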